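/- arXiv:2410.18571 — 3 statements merged into one kernel-verified Lean document; each statement's English description precedes it below -/
import Mathlib

section
/- The optimal value of the transferring problem is a lower bound on the cost of any combined transferring-plus-packing solution: suppose X : M × S → ℕ satisfies the demand constraints (i) and sending constraints (ii) of T(M)-feasibility, and for each movement (i,j) ∈ M there is a feasible packing (x^{ij}, y^{ij}) for the quantities T_s := X_{i,j,s} with per-package costs Cost_{i,j,p}. Define Y_{i,j,p} := ∑_{k=1}^{AP_p} y^{ij}_{p,k} (the number of used packages of type p on arc (i,j)). Then (X, Y) is T(M)-feasible, the transportation cost ∑_{(i,j) ∈ M, p ∈ P} Cost_{i,j,p} Y_{i,j,p} equals the total cost of the packings ∑_{(i,j) ∈ M} ∑_{p ∈ P} ∑_{k=1}^{AP_p} Cost_{i,j,p} y^{ij}_{p,k}, and consequently opt(M) ≤ obj_M(X, Y). -/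
open Finset

noncomputable section

variable {F S P : Type*} [Fintype F] [Fintype S] [Fintype P] [DecidableEq F]

/-- Final stock of SKU `s` at facility `i` after the redistribution `X` along movements in `M`. -/
def FSstock (M : Finset (F × F)) (IS : F → S → ℕ) (X : F → F → S → ℕ) (i : F) (s : S) : ℤ :=
  (IS i s : ℤ) + ∑ j ∈ univ.filter (fun j => (j, i) ∈ M), (X j i s : ℤ)
    - ∑ j ∈ univ.filter (fun j => (i, j) ∈ M), (X i j s : ℤ)

/-- Feasibility of `(X, Y)` for the transferring problem `T(M)`. -/
def TFeasible (W : Finset F) (M : Finset (F × F)) (IS FD : F → S → ℕ)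
    (w : S → ℝ) (Cap : P → ℝ) (X : F → F → S → ℕ) (Y : F → F → P → ℕ) : Prop :=
  (∀ i ∉ W, ∀ s, (FD i s : ℤ) ≤ FSstock M IS X i s) ∧
  (∀ i ∉ W, ∀ s,
    (∑ j ∈ univ.filter (fun j => (i, j) ∈ M), (X i j s : ℤ))
      ≤ max 0 ((IS i s : ℤ) - (FD i s : ℤ))) ∧
  (∀ m ∈ M, ∑ s, w s * (X m.1 m.2 s : ℝ) ≤ ∑ p, Cap p * (Y m.1 m.2 p : ℝ))

/-- Objective function of the transferring problem `T(M)`. -/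
def Tobj (W : Finset F) (M : Finset (F × F)) (IS FD VD : F → S → ℕ)
    (pr : F → S → ℝ) (Cost : F → F → P → ℝ) (α ε : ℝ)
    (X : F → F → S → ℕ) (Y : F → F → P → ℕ) : ℝ :=
  (∑ m ∈ M, ∑ p, Cost m.1 m.2 p * (Y m.1 m.2 p : ℝ))
  + α * ∑ i ∈ Wᶜ, ∑ s,
      pr i s * max 0 ((FD i s : ℝ) + (VD i s : ℝ) - ((FSstock M IS X i s : ℤ) : ℝ))
  + ε * ∑ m ∈ M, ∑ s, (X m.1 m.2 s : ℝ)

/-- Optimal value of the transferring problem `T(M)` (infimum in `EReal`,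
so that an infeasible problem has optimal value `⊤`). -/
def Topt (W : Finset F) (M : Finset (F × F)) (IS FD VD : F → S → ℕ)
    (pr : F → S → ℝ) (w : S → ℝ) (Cap : P → ℝ) (Cost : F → F → P → ℝ) (α ε : ℝ) : EReal :=
  sInf {v : EReal | ∃ X Y, TFeasible W M IS FD w Cap X Y ∧
    (Tobj W M IS FD VD pr Cost α ε X Y : EReal) = v}


/-- Feasibility of `(x, y)` for the packing problem `P(T)`. -/
def PackFeasible (AP : P → ℕ) (Cap : P → ℝ) (w : S → ℝ) (T : S → ℕ)
    (x : P → ℕ → S → ℕ) (y : P → ℕ → ℕ) : Prop :=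
  (∀ p : P, ∀ k ∈ Finset.range (AP p), y p k = 0 ∨ y p k = 1) ∧
  (∀ p : P, ∀ k ∈ Finset.range (AP p),
    ∑ s, w s * (x p k s : ℝ) ≤ Cap p * (y p k : ℝ)) ∧
  (∀ s : S, ∑ p : P, ∑ k ∈ Finset.range (AP p), x p k s = T s)

theorem PackFeasible.weight_le_cap_mul_card {AP : P → ℕ} {Cap : P → ℝ} {w : S → ℝ} {T : S → ℕ}
    {x : P → ℕ → S → ℕ} {y : P → ℕ → ℕ} (h : PackFeasible AP Cap w T x y) :
    ∑ s, w s * (T s : ℝ) ≤ ∑ p, Cap p * ((∑ k ∈ range (AP p), y p k : ℕ) : ℝ) :=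
  calc ∑ s, w s * (T s : ℝ)
      = ∑ p, ∑ k ∈ range (AP p), ∑ s, w s * (x p k s : ℝ) := by
        simp only [← h.2.2, Nat.cast_sum, mul_sum]
        rw [sum_comm]
        exact sum_congr rfl fun p _ => sum_comm
    _ ≤ ∑ p, ∑ k ∈ range (AP p), Cap p * (y p k : ℝ) :=
        sum_le_sum fun p _ => sum_le_sum fun k hk => h.2.1 p k hk
    _ = ∑ p, Cap p * ((∑ k ∈ range (AP p), y p k : ℕ) : ℝ) := by
        simp only [Nat.cast_sum, mul_sum]

theorem Topt_le_Tobj {W : Finset F} {M : Finset (F × F)} {IS FD VD : F → S → ℕ}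
    {pr : F → S → ℝ} {w : S → ℝ} {Cap : P → ℝ} {Cost : F → F → P → ℝ} {α ε : ℝ}
    {X : F → F → S → ℕ} {Y : F → F → P → ℕ} (h : TFeasible W M IS FD w Cap X Y) :
    Topt W M IS FD VD pr w Cap Cost α ε ≤ (Tobj W M IS FD VD pr Cost α ε X Y : EReal) :=
  sInf_le ⟨X, Y, h, rfl⟩

theorem transferring_lower_bound_of_packing_general
    (W : Finset F) (M : Finset (F × F))
    (IS FD VD : F → S → ℕ) (pr : F → S → ℝ) (w : S → ℝ) (Cap : P → ℝ)
    (Cost : F → F → P → ℝ) (α ε : ℝ) (AP : P → ℕ)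
    (X : F → F → S → ℕ)
    (hdem : ∀ i ∉ W, ∀ s, (FD i s : ℤ) ≤ FSstock M IS X i s)
    (hsend : ∀ i ∉ W, ∀ s,
      (∑ j ∈ univ.filter (fun j => (i, j) ∈ M), (X i j s : ℤ))
        ≤ max 0 ((IS i s : ℤ) - (FD i s : ℤ)))
    (x : F × F → P → ℕ → S → ℕ) (y : F × F → P → ℕ → ℕ)
    (hpack : ∀ m ∈ M, PackFeasible AP Cap w (fun s => X m.1 m.2 s) (x m) (y m))
    (Y : F → F → P → ℕ)
    (hY : ∀ i j p, Y i j p = ∑ k ∈ Finset.range (AP p), y (i, j) p k) :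
    TFeasible W M IS FD w Cap X Y ∧
    (∑ m ∈ M, ∑ p, Cost m.1 m.2 p * (Y m.1 m.2 p : ℝ))
      = ∑ m ∈ M, ∑ p, ∑ k ∈ Finset.range (AP p), Cost m.1 m.2 p * (y m p k : ℝ) ∧
    Topt W M IS FD VD pr w Cap Cost α ε ≤ (Tobj W M IS FD VD pr Cost α ε X Y : EReal) := by
  have hfeas : TFeasible W M IS FD w Cap X Y :=
    ⟨hdem, hsend, fun m hm => by simpa only [hY] using (hpack m hm).weight_le_cap_mul_card⟩
  refine ⟨hfeas, ?_, Topt_le_Tobj hfeas⟩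
  simp only [hY, Nat.cast_sum, mul_sum]

/-- The optimal value of the transferring problem is a lower bound on the cost of any
combined transferring-plus-packing solution. -/
theorem transferring_lower_bound_of_packing
    (W : Finset F) (M : Finset (F × F)) (hloop : ∀ i : F, (i, i) ∉ M)
    (IS FD VD : F → S → ℕ) (pr : F → S → ℝ) (w : S → ℝ) (Cap : P → ℝ)
    (Cost : F → F → P → ℝ) (α ε : ℝ) (AP : P → ℕ)
    (hpr : ∀ i s, 0 ≤ pr i s ∧ pr i s ≤ 1) (hw : ∀ s, 0 ≤ w s)
    (hCap : ∀ p, 0 ≤ Cap p) (hCost : ∀ i j p, 0 ≤ Cost i j p)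
    (hα : 0 ≤ α) (hε : 0 ≤ ε)
    (X : F → F → S → ℕ)
    (hdem : ∀ i ∉ W, ∀ s, (FD i s : ℤ) ≤ FSstock M IS X i s)
    (hsend : ∀ i ∉ W, ∀ s,
      (∑ j ∈ univ.filter (fun j => (i, j) ∈ M), (X i j s : ℤ))
        ≤ max 0 ((IS i s : ℤ) - (FD i s : ℤ)))
    (x : F × F → P → ℕ → S → ℕ) (y : F × F → P → ℕ → ℕ)
    (hpack : ∀ m ∈ M, PackFeasible AP Cap w (fun s => X m.1 m.2 s) (x m) (y m))
    (Y : F → F → P → ℕ)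
    (hY : ∀ i j p, Y i j p = ∑ k ∈ Finset.range (AP p), y (i, j) p k) :
    TFeasible W M IS FD w Cap X Y ∧
    (∑ m ∈ M, ∑ p, Cost m.1 m.2 p * (Y m.1 m.2 p : ℝ))
      = ∑ m ∈ M, ∑ p, ∑ k ∈ Finset.range (AP p), Cost m.1 m.2 p * (y m p k : ℝ) ∧
    Topt W M IS FD VD pr w Cap Cost α ε ≤ (Tobj W M IS FD VD pr Cost α ε X Y : EReal) :=
  transferring_lower_bound_of_packing_general W M IS FD VD pr w Cap Cost α ε AP X hdem hsend x y
    hpack Y hY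

end
end

section
/- The balance constraints of the rounding problem preserve satisfaction of integer fixed demands: let i ∈ F, let IS ∈ ℤ and FD ∈ ℤ, and suppose the relaxed values X^Rel satisfy IS + B_i ≥ FD (the relaxed final stock at i meets the fixed demand). If X : M → ℤ is a feasible rounding of X^Rel, then the rounded final stock also meets the fixed demand: IS + ∑_{j : (j,i) ∈ M} X_{j,i} − ∑_{j : (i,j) ∈ M} X_{i,j} ≥ FD. -/
open Finset

noncomputable section

variable {F : Type*} [Fintype F] [DecidableEq F]

/-- Total (relaxed) amount sent by facility `i`. -/
def ZS (M : Finset (F × F)) (XRel : F → F → ℝ) (i : F) : ℝ :=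
  ∑ j ∈ univ.filter (fun j => (i, j) ∈ M), XRel i j

/-- Total (relaxed) amount received by facility `i`. -/
def ZR (M : Finset (F × F)) (XRel : F → F → ℝ) (i : F) : ℝ :=
  ∑ j ∈ univ.filter (fun j => (j, i) ∈ M), XRel j i

/-- Net balance (received minus sent) of facility `i`. -/
def Bal (M : Finset (F × F)) (XRel : F → F → ℝ) (i : F) : ℝ :=
  ZR M XRel i - ZS M XRel i

/-- `X : M → ℤ` is a feasible rounding of the relaxed values `XRel`: entrywise bounds,
out-sum bounds, in-sum bounds, and balance bounds. -/
def FeasibleRounding (M : Finset (F × F)) (XRel : F → F → ℝ) (X : F → F → ℤ) : Prop :=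
  (∀ m ∈ M, ⌊XRel m.1 m.2⌋ ≤ X m.1 m.2 ∧ X m.1 m.2 ≤ ⌈XRel m.1 m.2⌉) ∧
  (∀ i : F, ⌊ZS M XRel i⌋ ≤ (∑ j ∈ univ.filter (fun j => (i, j) ∈ M), X i j) ∧
    (∑ j ∈ univ.filter (fun j => (i, j) ∈ M), X i j) ≤ ⌈ZS M XRel i⌉) ∧
  (∀ i : F, ⌊ZR M XRel i⌋ ≤ (∑ j ∈ univ.filter (fun j => (j, i) ∈ M), X j i) ∧
    (∑ j ∈ univ.filter (fun j => (j, i) ∈ M), X j i) ≤ ⌈ZR M XRel i⌉) ∧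
  (∀ i : F, ⌊Bal M XRel i⌋ ≤ (∑ j ∈ univ.filter (fun j => (j, i) ∈ M), X j i)
        - (∑ j ∈ univ.filter (fun j => (i, j) ∈ M), X i j) ∧
    (∑ j ∈ univ.filter (fun j => (j, i) ∈ M), X j i)
        - (∑ j ∈ univ.filter (fun j => (i, j) ∈ M), X i j) ≤ ⌈Bal M XRel i⌉)

/-- The balance constraints of the rounding problem preserve satisfaction of integer
fixed demands: if the relaxed final stock at `i` meets the fixed demand, so does the
rounded final stock. -/
theorem rounding_preserves_fixed_demand
    (M : Finset (F × F)) (hloop : ∀ i : F, (i, i) ∉ M)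
    (XRel : F → F → ℝ) (hXRel : ∀ m ∈ M, 0 ≤ XRel m.1 m.2)
    (i : F) (IS FD : ℤ)
    (hrel : (FD : ℝ) ≤ (IS : ℝ) + Bal M XRel i)
    (X : F → F → ℤ) (hX : FeasibleRounding M XRel X) :
    FD ≤ IS + (∑ j ∈ univ.filter (fun j => (j, i) ∈ M), X j i)
        - (∑ j ∈ univ.filter (fun j => (i, j) ∈ M), X i j) := by
  have h1 : FD - IS ≤ ⌊Bal M XRel i⌋ := by
    rw [Int.le_floor]; push_cast; linarith
  have h2 := (hX.2.2.2 i).1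
  omega

end
end

section
/- Existence of a feasible rounding (extended matrix rounding with balance constraints): for every finite set F of facilities, every movement set M ⊆ F × F with (i,i) ∉ M for all i ∈ F, and every X^Rel : M → ℝ with X^Rel ≥ 0, there exists a feasible rounding X : M → ℤ of X^Rel; that is, an integer vector satisfying the entrywise bounds ⌊X^Rel_{i,j}⌋ ≤ X_{i,j} ≤ ⌈X^Rel_{i,j}⌉, the out-sum bounds ⌊Z^S_i⌋ ≤ ∑_{j : (i,j) ∈ M} X_{i,j} ≤ ⌈Z^S_i⌉, the in-sum bounds ⌊Z^R_i⌋ ≤ ∑_{j : (j,i) ∈ M} X_{j,i} ≤ ⌈Z^R_i⌉, and the balance bounds ⌊B_i⌋ ≤ ∑_{j : (j,i) ∈ M} X_{j,i} − ∑_{j : (i,j) ∈ M} X_{i,j} ≤ ⌈B_i⌉, for all (i,j) ∈ M and i ∈ F. -/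
/-!
Conservation at a sender, a hub and a receiver node per facility (plus a root) encodes
`Z^S_i = ∑ⱼ X_{ij}`, `Z^S_i + B_i = Z^R_i` and `Z^R_i = ∑ⱼ X_{ji}`, so the relaxed values, the
out-sums, the balances and the in-sums form a real circulation on an auxiliary digraph, and any
integer circulation between their floors and ceilings is a feasible rounding.

A real circulation on a finite loopless digraph rounds arc by arc to an integer one. If some arc
carries a fractional value, no vertex meets exactly one fractional arc (conservation would make
its value integral), so the fractional arcs span at most as many vertices as there are arcs, and
a dimension count yields a nonzero circulation supported on them. Pushing flow along it until one
arc reaches its floor or ceiling decreases the number of fractional arcs.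
-/

open Finset

noncomputable section

variable {F : Type*} [Fintype F] [DecidableEq F]

section Circulation

variable {V A R : Type*} [Fintype A] [DecidableEq V]

def IsCirculation [AddCommMonoid R] (t h : A → V) (f : A → R) : Prop :=
  ∀ v, ∑ a with h a = v, f a = ∑ a with t a = v, f a

variable {t h : A → V}

namespace IsCirculation

theorem symm [AddCommMonoid R] {f : A → R} (hf : IsCirculation t h f) : IsCirculation h t f :=
  fun v => (hf v).symm

theorem add [AddCommMonoid R] {f g : A → R} (hf : IsCirculation t h f)
    (hg : IsCirculation t h g) : IsCirculation t h (f + g) := fun v => by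
  simp only [Pi.add_apply, sum_add_distrib, hf v, hg v]

theorem const_smul {M : Type*} [Monoid M] [AddCommMonoid R] [DistribMulAction M R] {f : A → R}
    (hf : IsCirculation t h f) (s : M) : IsCirculation t h (s • f) := fun v => by
  simp only [Pi.smul_apply, ← smul_sum, hf v]

theorem mem_of_forall_ne {S : Type*} [AddCommGroup R] [SetLike S R] [AddSubgroupClass S R]
    {s : S} {f : A → R} (hf : IsCirculation t h f) {v : V} {a₀ : A} (ht : t a₀ = v)
    (hh : h a₀ ≠ v) (hs : ∀ a ≠ a₀, t a = v ∨ h a = v → f a ∈ s) : f a₀ ∈ s := by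
  classical
  have hconserve := hf v
  rw [← add_sum_erase _ _ (by simpa using ht : a₀ ∈ ({a | t a = v} : Finset A))] at hconserve
  rw [eq_sub_of_add_eq hconserve.symm]
  refine sub_mem (sum_mem fun a ha => ?_) (sum_mem fun a ha => ?_)
  · rw [mem_filter_univ] at ha
    exact hs a (by rintro rfl; exact hh ha) (Or.inr ha)
  · obtain ⟨hne, ha⟩ := mem_erase.1 ha
    exact hs a hne (Or.inl ((mem_filter_univ a).1 ha))

end IsCirculation

theorem isCirculation_of_forall_ne [Fintype V] [AddCommGroup R] {f : A → R} (v₀ : V)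
    (hf : ∀ v ≠ v₀, ∑ a with h a = v, f a = ∑ a with t a = v, f a) : IsCirculation t h f := by
  intro v
  rcases eq_or_ne v v₀ with rfl | hv
  · have htotal : ∑ v, ∑ a with h a = v, f a = ∑ v, ∑ a with t a = v, f a := by
      rw [sum_fiberwise, sum_fiberwise]
    rw [Fintype.sum_eq_add_sum_compl v, Fintype.sum_eq_add_sum_compl v,
      sum_congr rfl fun w hw => hf w (by simpa using hw)] at htotal
    exact add_right_cancel htotal
  · exact hf v hv

theorem exists_add_smul_mem_Icc_and_eq_bound {lo hi f c : A → ℝ}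
    (hf : ∀ a, f a ∈ Set.Icc (lo a) (hi a)) (hc : c ≠ 0) :
    ∃ s : ℝ, (∀ a, (f + s • c) a ∈ Set.Icc (lo a) (hi a)) ∧
      ∃ a, c a ≠ 0 ∧ ((f + s • c) a = lo a ∨ (f + s • c) a = hi a) := by
  classical
  have hD : ({a | c a ≠ 0} : Finset A).Nonempty := by
    obtain ⟨a, ha⟩ := Function.ne_iff.1 hc
    exact ⟨a, by simpa using ha⟩
  -- the largest step along `c` that keeps coordinate `a` inside `[lo a, hi a]`
  let δ a := if 0 < c a then (hi a - f a) / c a else (lo a - f a) / c a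
  obtain ⟨a₀, ha₀, hmin⟩ := exists_min_image _ δ hD
  rw [mem_filter_univ] at ha₀
  have hmin' : ∀ a, c a ≠ 0 → δ a₀ ≤ δ a := fun a ha => hmin a (by simpa using ha)
  simp only [Pi.add_apply, Pi.smul_apply, smul_eq_mul, Set.mem_Icc]
  refine ⟨δ a₀, fun a => ?_, a₀, ha₀, ?_⟩
  · have hδ₀ : 0 ≤ δ a₀ := by
      rcases ha₀.lt_or_gt with hneg | hpos
      · simp only [δ, if_neg hneg.not_gt]
        exact div_nonneg_of_nonpos (by linarith [(hf a₀).1]) hneg.le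
      · simp only [δ, if_pos hpos]
        exact div_nonneg (by linarith [(hf a₀).2]) hpos.le
    rcases lt_trichotomy (c a) 0 with hneg | hzero | hpos
    · have hle : lo a - f a ≤ δ a₀ * c a := by
        have := hmin' a hneg.ne
        simp only [δ, if_neg hneg.not_gt] at this
        exact (le_div_iff_of_neg hneg).1 this
      constructor <;> nlinarith [(hf a).2]
    · simpa [hzero] using hf a
    · have hle : δ a₀ * c a ≤ hi a - f a := by
        have := hmin' a hpos.ne'
        simp only [δ, if_pos hpos] at this
        exact (le_div_iff₀ hpos).1 this
      constructor <;> nlinarith [(hf a).1]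
  · rcases ha₀.lt_or_gt with hneg | hpos
    · left
      simp only [δ, if_neg hneg.not_gt, div_mul_cancel₀ _ hneg.ne]
      ring
    · right
      simp only [δ, if_pos hpos, div_mul_cancel₀ _ hpos.ne']
      ring

theorem exists_isCirculation_ne_zero_of_card_ne_one [Fintype V] {E : Finset A}
    (hE : E.Nonempty) (hdeg : ∀ v, #{a ∈ E | t a = v ∨ h a = v} ≠ 1) :
    ∃ c : A → ℝ, c ≠ 0 ∧ (∀ a ∉ E, c a = 0) ∧ IsCirculation t h c := by
  classical
  set W : Finset V := {v | ∃ a ∈ E, t a = v ∨ h a = v}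
  -- double counting: each vertex of `W` meets at least two arcs of `E`, each arc at most two
  -- vertices of `W`
  have hWE : #W ≤ #E := by
    have := card_mul_le_card_mul (fun v a => t a = v ∨ h a = v) (s := W) (t := E) (m := 2)
      (n := 2) (fun v hv => ?_) (fun a _ => ?_)
    · omega
    · obtain ⟨a, ha, hva⟩ := (mem_filter_univ v).1 hv
      have hpos : 0 < #{a ∈ E | t a = v ∨ h a = v} := card_pos.2 ⟨a, mem_filter.2 ⟨ha, hva⟩⟩
      have := hdeg v
      change 2 ≤ #{a ∈ E | t a = v ∨ h a = v}
      omega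
    · calc #(W.bipartiteBelow (fun v a => t a = v ∨ h a = v) a) ≤ #{t a, h a} :=
            card_le_card fun v hv => by
              rcases (mem_filter.1 hv).2 with rfl | rfl <;> simp
        _ ≤ 2 := card_le_two
  obtain ⟨a₀, ha₀⟩ := hE
  have hW : t a₀ ∈ W := (mem_filter_univ _).2 ⟨a₀, ha₀, Or.inl rfl⟩
  -- fewer than `card A` linear conditions: conservation at all vertices of `W` but one,
  -- and vanishing off `E`
  let Φ : (A → ℝ) →ₗ[ℝ] (W.erase (t a₀) ⊕ ↥Eᶜ → ℝ) := LinearMap.pi <| Sum.elim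
    (fun v => ∑ a with h a = v.1, LinearMap.proj a - ∑ a with t a = v.1, LinearMap.proj a)
    (fun a => LinearMap.proj a.1)
  have hrank : Module.finrank ℝ (W.erase (t a₀) ⊕ ↥Eᶜ → ℝ) < Module.finrank ℝ (A → ℝ) := by
    have := card_pos.2 ⟨_, hW⟩
    have := card_le_univ E
    simp only [Module.finrank_fintype_fun_eq_card, Fintype.card_sum, Fintype.card_coe,
      card_erase_of_mem hW, card_compl]
    omega
  obtain ⟨c, hc, hc0⟩ := (Submodule.ne_bot_iff _).1 (LinearMap.ker_ne_bot_of_finrank_lt hrank)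
  have hΦ : ∀ i, Φ c i = 0 := fun i => congrFun (LinearMap.mem_ker.1 hc) i
  have hcE : ∀ a ∉ E, c a = 0 := fun a ha => by
    simpa [Φ] using hΦ (.inr ⟨a, mem_compl.2 ha⟩)
  refine ⟨c, hc0, hcE, isCirculation_of_forall_ne (t a₀) fun v hv => ?_⟩
  by_cases hvW : v ∈ W
  · simpa [Φ, sub_eq_zero] using hΦ (.inl ⟨v, mem_erase.2 ⟨hv, hvW⟩⟩)
  · have hinc : ∀ a, t a = v ∨ h a = v → c a = 0 := fun a hva =>
      hcE a fun ha => hvW ((mem_filter_univ v).2 ⟨a, ha, hva⟩)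
    rw [sum_eq_zero fun a ha => hinc a (.inr ((mem_filter_univ a).1 ha)),
      sum_eq_zero fun a ha => hinc a (.inl ((mem_filter_univ a).1 ha))]

open Classical in
theorem IsCirculation.card_filter_notMem_incident_ne_one {S : Type*} [AddCommGroup R]
    [SetLike S R] [AddSubgroupClass S R] (hth : ∀ a, t a ≠ h a) {f : A → R}
    (hf : IsCirculation t h f) (s : S) (v : V) :
    #{a | f a ∉ s ∧ (t a = v ∨ h a = v)} ≠ 1 := by
  intro hone
  obtain ⟨a₀, ha₀⟩ := card_eq_one.1 hone
  have hmem := mem_singleton_self a₀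
  rw [← ha₀, mem_filter_univ] at hmem
  have hothers : ∀ a ≠ a₀, t a = v ∨ h a = v → f a ∈ s := fun a hne hinc => by
    by_contra hfa
    exact hne (mem_singleton.1 (ha₀ ▸ mem_filter_univ a |>.2 ⟨hfa, hinc⟩))
  rcases hmem with ⟨hfa₀, ht | hh⟩
  · exact hfa₀ (hf.mem_of_forall_ne ht (ht ▸ (hth a₀).symm) hothers)
  · exact hfa₀ <| hf.symm.mem_of_forall_ne hh (hh ▸ hth a₀) fun a hne hinc =>
      hothers a hne hinc.symm

open Classical in
theorem IsCirculation.exists_rounding_step [Fintype V] (hth : ∀ a, t a ≠ h a) {f : A → ℝ}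
    (hf : IsCirculation t h f) {a₁ : A} (ha₁ : f a₁ ∉ AddSubgroup.zmultiples (1 : ℝ)) :
    ∃ f' : A → ℝ, IsCirculation t h f' ∧ (∀ a, f' a ∈ Set.Icc (⌊f a⌋ : ℝ) ⌈f a⌉) ∧
      #{a | f' a ∉ AddSubgroup.zmultiples (1 : ℝ)} <
        #{a | f a ∉ AddSubgroup.zmultiples (1 : ℝ)} := by
  set E : Finset A := {a | f a ∉ AddSubgroup.zmultiples (1 : ℝ)}
  obtain ⟨c, hc0, hcE, hc⟩ := exists_isCirculation_ne_zero_of_card_ne_one (t := t) (h := h)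
    (E := E) ⟨a₁, by simpa [E] using ha₁⟩ fun v => by
      simpa [E, filter_filter] using hf.card_filter_notMem_incident_ne_one hth _ v
  obtain ⟨s, hbox, a₀, hca₀, ha₀⟩ := exists_add_smul_mem_Icc_and_eq_bound
    (fun a => ⟨Int.floor_le (f a), Int.le_ceil (f a)⟩) hc0
  refine ⟨f + s • c, hf.add (hc.const_smul s), hbox, card_lt_card ?_⟩
  rw [ssubset_iff_of_subset fun a ha => ?_]
  · refine ⟨a₀, by_contra fun ha₀E => hca₀ (hcE a₀ ha₀E), ?_⟩
    simp only [mem_filter_univ, not_not]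
    rcases ha₀ with ha₀ | ha₀ <;> rw [ha₀] <;> exact AddSubgroup.intCast_mem_zmultiples_one _
  · simp only [E, mem_filter_univ] at ha ⊢
    intro hfa
    have hca : c a = 0 := hcE a (by simpa [E] using hfa)
    simp [hca, hfa] at ha

theorem IsCirculation.exists_int_rounding [Fintype V] (hth : ∀ a, t a ≠ h a) {f : A → ℝ}
    (hf : IsCirculation t h f) :
    ∃ g : A → ℤ, (∀ a, ⌊f a⌋ ≤ g a ∧ g a ≤ ⌈f a⌉) ∧ IsCirculation t h g := by
  classical
  induction hn : #{a | f a ∉ AddSubgroup.zmultiples (1 : ℝ)} using Nat.strong_induction_on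
    generalizing f with
  | _ n ih =>
  by_cases hint : ∀ a, f a ∈ AddSubgroup.zmultiples (1 : ℝ)
  · choose g hg using fun a => AddSubgroup.mem_zmultiples_iff.1 (hint a)
    obtain rfl : f = fun a => (g a : ℝ) := funext fun a => by simp [← hg]
    exact ⟨g, fun a => by simp, fun v => by simpa only [← Int.cast_sum, Int.cast_inj] using hf v⟩
  · obtain ⟨a₁, ha₁⟩ := not_forall.1 hint
    obtain ⟨f', hf', hbox, hlt⟩ := hf.exists_rounding_step hth ha₁
    obtain ⟨g, hg, hgc⟩ := ih _ (hn ▸ hlt) hf' rfl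
    exact ⟨g, fun a => ⟨(Int.le_floor.2 (hbox a).1).trans (hg a).1,
      (hg a).2.trans (Int.ceil_le.2 (hbox a).2)⟩, hgc⟩

end Circulation

namespace RoundingNetwork

variable {ι : Type*}

-- Nodes: `some (inl i)` is the sender `sᵢ`, `some (inr (inl i))` the hub `mᵢ`,
-- `some (inr (inr i))` the receiver `rᵢ`, and `none` the root. Arcs: `inl (i, j)` runs
-- `rⱼ → sᵢ` and carries `X i j`; `inr (inl i)` runs `sᵢ → mᵢ` (`Z^S_i`);
-- `inr (inr (inl i))` runs `root → mᵢ` (`B_i`); `inr (inr (inr i))` runs `mᵢ → rᵢ` (`Z^R_i`).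
def tail : (ι × ι) ⊕ ι ⊕ ι ⊕ ι → Option (ι ⊕ ι ⊕ ι)
  | .inl (_, j) => some (.inr (.inr j))
  | .inr (.inl i) => some (.inl i)
  | .inr (.inr (.inl _)) => none
  | .inr (.inr (.inr i)) => some (.inr (.inl i))

def head : (ι × ι) ⊕ ι ⊕ ι ⊕ ι → Option (ι ⊕ ι ⊕ ι)
  | .inl (i, _) => some (.inl i)
  | .inr (.inl i) => some (.inr (.inl i))
  | .inr (.inr (.inl i)) => some (.inr (.inl i))
  | .inr (.inr (.inr i)) => some (.inr (.inr i))

theorem tail_ne_head : ∀ a : (ι × ι) ⊕ ι ⊕ ι ⊕ ι, tail a ≠ head a := by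
  rintro (_ | _ | _ | _) <;> simp [tail, head]

theorem isCirculation_iff [Fintype ι] [DecidableEq ι] {R : Type*} [AddCommGroup R]
    (φ : (ι × ι) ⊕ ι ⊕ ι ⊕ ι → R) :
    IsCirculation tail head φ ↔ ∀ i,
      ∑ j, φ (.inl (i, j)) = φ (.inr (.inl i)) ∧
      φ (.inr (.inl i)) + φ (.inr (.inr (.inl i))) = φ (.inr (.inr (.inr i))) ∧
      φ (.inr (.inr (.inr i))) = ∑ j, φ (.inl (j, i)) := by
  constructor
  · intro hφ i
    simp only [IsCirculation, sum_filter, Fintype.sum_sum_type, Fintype.sum_prod_type] at hφ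
    refine ⟨?_, ?_, ?_⟩
    · simpa [head, tail] using hφ (some (.inl i))
    · simpa [head, tail] using hφ (some (.inr (.inl i)))
    · simpa [head, tail] using hφ (some (.inr (.inr i)))
  · intro hφ
    refine isCirculation_of_forall_ne none fun v hv => ?_
    simp only [sum_filter, Fintype.sum_sum_type, Fintype.sum_prod_type]
    rcases v with _ | i | i | i
    · exact absurd rfl hv
    · simpa [head, tail] using (hφ i).1
    · simpa [head, tail] using (hφ i).2.1
    · simpa [head, tail] using (hφ i).2.2

def relaxedFlow (M : Finset (F × F)) (XRel : F → F → ℝ) : (F × F) ⊕ F ⊕ F ⊕ F → ℝ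
  | .inl (i, j) => if (i, j) ∈ M then XRel i j else 0
  | .inr (.inl i) => ZS M XRel i
  | .inr (.inr (.inl i)) => Bal M XRel i
  | .inr (.inr (.inr i)) => ZR M XRel i

theorem isCirculation_relaxedFlow (M : Finset (F × F)) (XRel : F → F → ℝ) :
    IsCirculation tail head (relaxedFlow M XRel) :=
  (isCirculation_iff _).2 fun i =>
    ⟨by simp [relaxedFlow, ZS, sum_filter], by simp [relaxedFlow, Bal],
      by simp [relaxedFlow, ZR, sum_filter]⟩

end RoundingNetwork

theorem exists_feasible_rounding_general
    (M : Finset (F × F))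
    (XRel : F → F → ℝ) :
    ∃ X : F → F → ℤ, FeasibleRounding M XRel X := by
  obtain ⟨g, hg, hgc⟩ := (RoundingNetwork.isCirculation_relaxedFlow M XRel).exists_int_rounding
    RoundingNetwork.tail_ne_head
  have hcons := (RoundingNetwork.isCirculation_iff g).1 hgc
  have hzero : ∀ p ∉ M, g (.inl p) = 0 := fun p hp => by
    simpa [RoundingNetwork.relaxedFlow, hp, le_antisymm_iff, and_comm] using hg (.inl p)
  have hsum_filter (p : F → F × F) : ∑ j with p j ∈ M, g (.inl (p j)) = ∑ j, g (.inl (p j)) :=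
    sum_filter_of_ne fun j _ hj => by_contra fun hp => hj (hzero _ hp)
  have hout i : ∑ j with (i, j) ∈ M, g (.inl (i, j)) = g (.inr (.inl i)) :=
    (hsum_filter (Prod.mk i)).trans (hcons i).1
  have hin i : ∑ j with (j, i) ∈ M, g (.inl (j, i)) = g (.inr (.inr (.inr i))) :=
    (hsum_filter (·, i)).trans (hcons i).2.2.symm
  refine ⟨fun i j => g (.inl (i, j)), fun m hm => ?_, fun i => ?_, fun i => ?_, fun i => ?_⟩
  · simpa [RoundingNetwork.relaxedFlow, hm] using hg (.inl m)
  · rw [hout]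
    exact hg _
  · rw [hin]
    exact hg _
  · rw [hin, hout, ← (hcons i).2.1, add_sub_cancel_left]
    exact hg _

/-- Existence of a feasible rounding (extended matrix rounding with balance
constraints). -/
theorem exists_feasible_rounding
    (M : Finset (F × F)) (hloop : ∀ i : F, (i, i) ∉ M)
    (XRel : F → F → ℝ) (hXRel : ∀ m ∈ M, 0 ≤ XRel m.1 m.2) :
    ∃ X : F → F → ℤ, FeasibleRounding M XRel X :=
  exists_feasible_rounding_general M XRel
end
end
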